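/- Consider the two-player set N = {1,2}, configuration space Λ = {0,1} × {0,1}, performance function V(λ) = 1[λ₁ = 0]·1[λ₂ = 0], and baseline λ⁰ = (0,0). Let ν_V(S) be the variance of V(λ ⊕_S λ⁰) when λ is drawn uniformly at random from Λ. Then ν_V({1}) = 1/4 and ν_V({1,2}) = 3/16, so ν_V({1}) > ν_V({1,2}) even though {1} ⊆ {1,2}; hence the sensitivity game is not monotone. -/
import Mathlib

/-- The blended configuration `λ ⊕_S λ⁰` for the two-player configuration space
`Λ = {0,1} × {0,1}`, where player 1 is `(0 : Fin 2)` and player 2 is `(1 : Fin 2)`. -/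
def blend (S : Finset (Fin 2)) (lam lam0 : Fin 2 × Fin 2) : Fin 2 × Fin 2 :=
  (if (0 : Fin 2) ∈ S then lam.1 else lam0.1,
   if (1 : Fin 2) ∈ S then lam.2 else lam0.2)

/-- The performance function `V(λ) = 1[λ₁ = 0]·1[λ₂ = 0]`. -/
def perf (lam : Fin 2 × Fin 2) : ℝ :=
  (if lam.1 = 0 then 1 else 0) * (if lam.2 = 0 then 1 else 0)

/-- The uniform expectation of a real-valued function on a finite nonempty type. -/
noncomputable def unifExp {α : Type*} [Fintype α] (f : α → ℝ) : ℝ :=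
  (∑ x, f x) / (Fintype.card α)

/-- The sensitivity game: the variance `E[f²] − (E[f])²` of
`f(λ) = V(λ ⊕_S λ⁰)` for `λ` uniform on `Λ`, with baseline `λ⁰ = (0,0)`. -/
noncomputable def nuV (S : Finset (Fin 2)) : ℝ :=
  unifExp (fun lam => (perf (blend S lam ((0 : Fin 2), (0 : Fin 2)))) ^ 2) -
    (unifExp (fun lam => perf (blend S lam ((0 : Fin 2), (0 : Fin 2))))) ^ 2

/-- `ν_V({1}) = 1/4` and `ν_V({1,2}) = 3/16`, so
`ν_V({1}) > ν_V({1,2})` although `{1} ⊆ {1,2}`: the sensitivity game is not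
monotone. -/
theorem stmt_13 :
    nuV {(0 : Fin 2)} = 1 / 4 ∧
    nuV {(0 : Fin 2), (1 : Fin 2)} = 3 / 16 ∧
    ({(0 : Fin 2)} : Finset (Fin 2)) ⊆ {(0 : Fin 2), (1 : Fin 2)} ∧
    nuV {(0 : Fin 2), (1 : Fin 2)} < nuV {(0 : Fin 2)} := by
  have h1 : nuV {(0 : Fin 2)} = 1 / 4 := by
    simp [nuV, unifExp, blend, perf, Fintype.sum_prod_type, Fin.sum_univ_succ]
    rw [show (Finset.filter (fun x : Fin 2 × Fin 2 => x.1 = 0) Finset.univ).card = 2 from by decide]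
    norm_num
  have h2 : nuV {(0 : Fin 2), (1 : Fin 2)} = 3 / 16 := by
    simp [nuV, unifExp, blend, perf, Fintype.sum_prod_type, Fin.sum_univ_succ]
    norm_num
  refine ⟨h1, h2, ?_, by rw [h1, h2]; norm_num⟩
  intro x hx; simp at hx; simp [hx]
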